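/- Let AF = ⟨AR, attacks⟩ be a finite argumentation framework and S ⊆ AR. Then S is a preferred extension of AF if and only if compl(S) is a model of α(AF) and the formula α(AF) ∧ ⋀_{d(a) ∉ compl(S)} ¬d(a) ∧ ¬(⋀_{d(a) ∈ compl(S)} d(a)) is unsatisfiable. -/
import Mathlib


inductive PForm (α : Type) where
  | atom : α → PForm α
  | tru : PForm α
  | fls : PForm α
  | neg : PForm α → PForm α
  | conj : PForm α → PForm α → PForm α
  | disj : PForm α → PForm α → PForm α
  | impl : PForm α → PForm α → PForm α
deriving DecidableEq

def PForm.eval {α : Type} (M : Set α) : PForm α → Prop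
  | .atom a => a ∈ M
  | .tru => True
  | .fls => False
  | .neg φ => ¬ PForm.eval M φ
  | .conj φ ψ => PForm.eval M φ ∧ PForm.eval M ψ
  | .disj φ ψ => PForm.eval M φ ∨ PForm.eval M ψ
  | .impl φ ψ => PForm.eval M φ → PForm.eval M ψ

def PForm.subst {α β : Type} (σ : α → PForm β) : PForm α → PForm β
  | .atom a => σ a
  | .tru => .tru
  | .fls => .fls
  | .neg φ => .neg (PForm.subst σ φ)
  | .conj φ ψ => .conj (PForm.subst σ φ) (PForm.subst σ ψ)
  | .disj φ ψ => .disj (PForm.subst σ φ) (PForm.subst σ ψ)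
  | .impl φ ψ => .impl (PForm.subst σ φ) (PForm.subst σ ψ)

def ModelOf {α : Type} (M : Set α) (T : Set (PForm α)) : Prop := ∀ φ ∈ T, PForm.eval M φ

def MinimalModel {α : Type} (M : Set α) (T : Set (PForm α)) : Prop :=
  ModelOf M T ∧ ∀ M', ModelOf M' T → M' ⊆ M → M' = M

def MaximalModel {α : Type} (M : Set α) (T : Set (PForm α)) : Prop :=
  ModelOf M T ∧ ∀ M', ModelOf M' T → M ⊆ M' → M' = M

noncomputable def bigConj {ι α : Type} (s : Finset ι) (f : ι → PForm α) : PForm α :=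
  (s.toList.map f).foldr PForm.conj PForm.tru

noncomputable def bigDisj {ι α : Type} (s : Finset ι) (f : ι → PForm α) : PForm α :=
  (s.toList.map f).foldr PForm.disj PForm.fls

def attackers {α : Type} [DecidableEq α] (att : Finset (α × α)) (a : α) : Finset α :=
  (att.filter (fun p => p.2 = a)).image Prod.fst

def conflictFree {α : Type} (att : Finset (α × α)) (S : Set α) : Prop :=
  ∀ a ∈ S, ∀ b ∈ S, (a, b) ∉ att

def acceptable {α : Type} (att : Finset (α × α)) (S : Set α) (a : α) : Prop :=
  ∀ b, (b, a) ∈ att → ∃ c ∈ S, (c, b) ∈ att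

def admissible {α : Type} (att : Finset (α × α)) (S : Set α) : Prop :=
  conflictFree att S ∧ ∀ a ∈ S, acceptable att S a

def preferredExt {α : Type} (att : Finset (α × α)) (S : Set α) : Prop :=
  admissible att S ∧ ∀ S', admissible att S' → S ⊆ S' → S' = S

noncomputable def alphaTheory {α : Type} [DecidableEq α] (att : Finset (α × α)) : Set (PForm α) :=
  { φ | ∃ p ∈ att, φ = PForm.impl (PForm.neg (PForm.atom p.1)) (PForm.atom p.2) } ∪
  { φ | ∃ p ∈ att, φ = PForm.impl (bigConj (attackers att p.1) PForm.atom) (PForm.atom p.2) }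

noncomputable def betaTheory {α : Type} [DecidableEq α] (att : Finset (α × α)) : Set (PForm α) :=
  { φ | ∃ p ∈ att, φ = PForm.impl (PForm.atom p.2) (PForm.neg (PForm.atom p.1)) } ∪
  { φ | ∃ p ∈ att, φ = PForm.impl (PForm.atom p.2) (bigDisj (attackers att p.1) PForm.atom) }

lemma eval_bigConj {ι α : Type} (M : Set α) (s : Finset ι) (f : ι → PForm α) :
    PForm.eval M (bigConj s f) ↔ ∀ i ∈ s, PForm.eval M (f i) := by
  unfold bigConj
  have h : ∀ l : List ι, PForm.eval M ((l.map f).foldr PForm.conj PForm.tru) ↔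
      ∀ i ∈ l, PForm.eval M (f i) := by
    intro l
    induction l with
    | nil => simp [PForm.eval]
    | cons a t ih => simp [PForm.eval, ih]
  rw [h]
  simp [Finset.mem_toList]

lemma mem_attackers {α : Type} [DecidableEq α] (att : Finset (α × α)) (a b : α) :
    b ∈ attackers att a ↔ (b, a) ∈ att := by
  unfold attackers
  simp only [Finset.mem_image, Finset.mem_filter]
  constructor
  · rintro ⟨⟨x, y⟩, ⟨hmem, hy⟩, hx⟩
    cases hy; cases hx; exact hmem
  · intro h; exact ⟨(b, a), ⟨h, rfl⟩, rfl⟩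

lemma model_alpha_iff {α : Type} [DecidableEq α] (att : Finset (α × α)) (M : Set α) :
    ModelOf M (alphaTheory att) ↔ admissible att Mᶜ := by
  constructor
  · intro h
    constructor
    · intro a ha b hb hab
      have h1 := h _ (Or.inl ⟨(a, b), hab, rfl⟩)
      simp only [PForm.eval] at h1
      exact hb (h1 ha)
    · intro a ha b hba
      have h2 := h _ (Or.inr ⟨(b, a), hba, rfl⟩)
      simp only [PForm.eval, eval_bigConj] at h2
      by_contra hc
      push_neg at hc
      apply ha
      apply h2
      intro c hcmem
      by_contra hcM
      exact hc c hcM ((mem_attackers att b c).mp hcmem)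
  · rintro ⟨hcf, hacc⟩ φ (⟨p, hp, rfl⟩ | ⟨p, hp, rfl⟩)
    · simp only [PForm.eval]
      intro h1
      by_contra h2
      exact hcf p.1 h1 p.2 h2 hp
    · simp only [PForm.eval, eval_bigConj]
      intro hall
      by_contra h2
      obtain ⟨c, hcS, hcb⟩ := hacc p.2 h2 p.1 hp
      exact hcS (hall c ((mem_attackers att p.1 c).mpr hcb))

theorem stmt6 {α : Type} [DecidableEq α] [Fintype α] (att : Finset (α × α)) (S : Finset α) :
    preferredExt att (↑S : Set α) ↔
      (ModelOf (↑(Sᶜ) : Set α) (alphaTheory att) ∧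
        ¬ ∃ N : Set α,
          ModelOf N
            (alphaTheory att ∪ { φ | ∃ x ∈ S, φ = PForm.neg (PForm.atom x) } ∪
              {PForm.neg (bigConj Sᶜ PForm.atom)})) := by
  have hcc : (↑(Sᶜ) : Set α) = (↑S : Set α)ᶜ := by simp [Finset.coe_compl]
  constructor
  · rintro ⟨hadm, hmax⟩
    constructor
    · rw [model_alpha_iff, hcc, compl_compl]; exact hadm
    · rintro ⟨N, hN⟩
      have hα : ModelOf N (alphaTheory att) := fun φ hφ => hN φ (Or.inl (Or.inl hφ))
      have hadmN : admissible att Nᶜ := (model_alpha_iff att N).mp hα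
      have hsub : (↑S : Set α) ⊆ Nᶜ := by
        intro x hx
        have := hN _ (Or.inl (Or.inr ⟨x, hx, rfl⟩))
        simpa [PForm.eval] using this
      have heq := hmax Nᶜ hadmN hsub
      have hneg := hN _ (Or.inr rfl)
      simp only [PForm.eval, eval_bigConj] at hneg
      apply hneg
      intro a haS
      have ha : a ∉ (↑S : Set α) := by simpa using Finset.mem_compl.mp haS
      have hN' : N = (↑S : Set α)ᶜ := by rw [← heq, compl_compl]
      rw [hN']; exact ha
  · rintro ⟨hmodel, hnex⟩
    have hadm : admissible att (↑S : Set α) := by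
      have := (model_alpha_iff att _).mp hmodel
      rwa [hcc, compl_compl] at this
    refine ⟨hadm, ?_⟩
    intro S' hadm' hsub
    by_contra hne
    apply hnex
    refine ⟨S'ᶜ, ?_⟩
    have hm : ModelOf S'ᶜ (alphaTheory att) :=
      (model_alpha_iff att _).mpr (by rwa [compl_compl])
    have hnsub : ¬ S' ⊆ (↑S : Set α) := fun h => hne (h.antisymm hsub)
    obtain ⟨a, haS', haS⟩ := Set.not_subset.mp hnsub
    rintro φ ((hφ | ⟨x, hx, rfl⟩) | hφ)
    · exact hm φ hφ
    · simp only [PForm.eval, Set.mem_compl_iff, not_not]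
      exact hsub (Finset.mem_coe.mpr hx)
    · rcases hφ with rfl
      simp only [PForm.eval, eval_bigConj]
      intro hall
      exact hall a (Finset.mem_compl.mpr (by simpa using haS)) haS'
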